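/- Let $H$ be a self-adjoint operator, $E \in \mathbb{R}$ with $E \notin \overline{\sigma_p(H)}$, let $C > 0$, and let $\tilde K$ be a compact self-adjoint operator. Suppose that for some $\delta > 0$ the Mourre-type inequality $P_{\delta}\, B\, P_{\delta} \ge C P_{\delta} + \tilde K$ holds, where $P_{\delta} := \mathbb{P}_{(E - \delta/2, E + \delta/2)}(H)$ and $B$ is a symmetric quadratic form bounded relative to the given setting. Then for all sufficiently small $\delta' \in (0, \delta)$, $P_{\delta'}\, B\, P_{\delta'} \ge \frac{C}{2} P_{\delta'}$. -/

import Mathlib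

/-! Points of `∩_d range P_d` satisfy `‖(T - E) y‖ ≤ (d/2) ‖y‖` for every `d`, so they are
eigenvectors for `E` and hence zero. The decreasing projections `P_d` therefore tend strongly to
`0`, and compactness of `K` upgrades this to `‖P_d K‖ → 0`. Compressing the Mourre estimate by
`P_d ≤ P_δ` gives `P_d B P_d ≥ C P_d + P_d K P_d ≥ (C - ‖P_d K‖) P_d`. -/

open Set

variable {H : Type*} [NormedAddCommGroup H] [InnerProductSpace ℂ H] [CompleteSpace H]

/-- `P` is the spectral projection `𝟙_{(a,b)}(T)` of the bounded self-adjoint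
operator `T`: an orthogonal projection commuting with `T` on whose range
`a‖x‖² < Re⟪Tx,x⟫ < b‖x‖²` holds for nonzero `x`, and which is maximal with
this property. -/
def IsOpenIntervalSpectralProj (T P : H →L[ℂ] H) (a b : ℝ) : Prop :=
  IsIdempotentElem P ∧ IsSelfAdjoint P ∧ T ∘L P = P ∘L T ∧
    (∀ x ∈ LinearMap.range (P : H →ₗ[ℂ] H), x ≠ 0 →
      a * ‖x‖ ^ 2 < T.reApplyInnerSelf x ∧ T.reApplyInnerSelf x < b * ‖x‖ ^ 2) ∧
    (∀ Q : H →L[ℂ] H, IsIdempotentElem Q → IsSelfAdjoint Q → T ∘L Q = Q ∘L T →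
      (∀ x ∈ LinearMap.range (Q : H →ₗ[ℂ] H), x ≠ 0 →
        a * ‖x‖ ^ 2 < T.reApplyInnerSelf x ∧ T.reApplyInnerSelf x < b * ‖x‖ ^ 2) →
      LinearMap.range (Q : H →ₗ[ℂ] H) ≤ LinearMap.range (P : H →ₗ[ℂ] H))

open ContinuousLinearMap Filter Topology
open scoped InnerProductSpace

namespace ContinuousLinearMap.IsIdempotentElem

variable {R M : Type*} [Semiring R] [TopologicalSpace M] [AddCommMonoid M] [Module R M]

theorem apply_of_mem_range {P : M →L[R] M} (hP : IsIdempotentElem P) {x : M}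
    (hx : x ∈ LinearMap.range (P : M →ₗ[R] M)) : P x = x :=
  (LinearMap.IsIdempotentElem.mem_range_iff hP.toLinearMap).mp hx

theorem comp_eq_right_of_range_le {P Q : M →L[R] M} (hQ : IsIdempotentElem Q)
    (h : LinearMap.range (P : M →ₗ[R] M) ≤ LinearMap.range (Q : M →ₗ[R] M)) : Q ∘L P = P := by
  ext x
  exact hQ.apply_of_mem_range (h ⟨x, rfl⟩)

end ContinuousLinearMap.IsIdempotentElem

section InnerProductSpace

variable {𝕜 E : Type*} [RCLike 𝕜] [NormedAddCommGroup E] [InnerProductSpace 𝕜 E]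

theorem ContinuousLinearMap.norm_le_of_abs_re_inner_le {T : E →L[𝕜] E}
    (hT : (T : E →ₗ[𝕜] E).IsSymmetric) {M : ℝ} (hM : 0 ≤ M)
    (h : ∀ x, |RCLike.re ⟪T x, x⟫_𝕜| ≤ M * ‖x‖ ^ 2) : ‖T‖ ≤ M := by
  rw [T.norm_eq_iSup_rayleighQuotient hT]
  refine ciSup_le fun x => ?_
  rcases eq_or_ne x 0 with rfl | hx
  · simpa [rayleighQuotient] using hM
  rw [rayleighQuotient, reApplyInnerSelf_apply, abs_div, abs_sq, div_le_iff₀ (by positivity)]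
  exact h x

variable [CompleteSpace E]

theorem IsStarProjection.norm_apply_le {P : E →L[𝕜] E} (hP : IsStarProjection P) (x : E) :
    ‖P x‖ ≤ ‖x‖ :=
  (le_opNorm P x).trans (mul_le_of_le_one_left (norm_nonneg x) (IsStarProjection.norm_le P hP))

theorem IsStarProjection.re_inner_apply_self {P : E →L[𝕜] E} (hP : IsStarProjection P) (x : E) :
    RCLike.re ⟪P x, x⟫_𝕜 = ‖P x‖ ^ 2 := by
  have hPP : P (P x) = P x := congr($(hP.isIdempotentElem.eq) x)
  rw [← inner_self_eq_norm_sq (𝕜 := 𝕜), ← hP.isSelfAdjoint.isSymmetric.apply_clm, hPP]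

/-- The complements `(range Q i)ᗮ` increase to a dense subspace, so their projections
`1 - Q i` converge strongly to the identity. -/
theorem tendsto_apply_nhds_zero_of_antitone {ι : Type*} [Preorder ι] {Q : ι → E →L[𝕜] E}
    (hQ : ∀ i, IsStarProjection (Q i))
    (hanti : Antitone fun i => LinearMap.range (Q i : E →ₗ[𝕜] E))
    (hbot : ⨅ i, LinearMap.range (Q i : E →ₗ[𝕜] E) = ⊥) (x : E) :
    Tendsto (fun i => Q i x) atTop (𝓝 0) := by
  have hQ' := fun i => isStarProjection_iff_eq_starProjection_range.mp (hQ i)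
  have := fun i => (hQ' i).1
  set U := fun i => (LinearMap.range (Q i : E →ₗ[𝕜] E))ᗮ
  have hU : Monotone U := fun i j hij => Submodule.orthogonal_le (hanti hij)
  have hdense : ⊤ ≤ (⨆ i, U i).topologicalClosure := by
    rw [← Submodule.orthogonal_orthogonal_eq_closure, ← Submodule.iInf_orthogonal]
    simp only [U, Submodule.orthogonal_orthogonal, hbot, Submodule.bot_orthogonal_eq_top, le_refl]
  have hsub : ∀ i, Q i x = x - (U i).starProjection x := fun i => by
    have := Submodule.starProjection_add_starProjection_orthogonal
      (K := LinearMap.range (Q i : E →ₗ[𝕜] E)) x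
    rw [← (hQ' i).2] at this
    exact eq_sub_of_add_eq this
  simpa [hsub] using (Submodule.starProjection_tendsto_self U hU x hdense).const_sub x

end InnerProductSpace

/-- The family converges uniformly on the relatively compact image of the unit ball,
through a finite net of it. -/
theorem tendsto_comp_nhds_zero_of_isCompactOperator {𝕜 ι E F G : Type*} [RCLike 𝕜]
    [NormedAddCommGroup E] [NormedSpace 𝕜 E] [NormedAddCommGroup F] [NormedSpace 𝕜 F]
    [NormedAddCommGroup G] [NormedSpace 𝕜 G] {l : Filter ι} {A : ι → E →L[𝕜] F} {M : ℝ}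
    (hA : ∀ i, ‖A i‖ ≤ M) (hAx : ∀ x, Tendsto (fun i => A i x) l (𝓝 0)) {K : G →L[𝕜] E}
    (hK : IsCompactOperator K) : Tendsto (fun i => A i ∘L K) l (𝓝 0) := by
  refine Metric.tendsto_nhds.mpr fun ε hε => ?_
  obtain ⟨r, hr, hMr⟩ := exists_pos_mul_lt (by positivity : 0 < ε / 4) M
  obtain ⟨t, -, ht, hcover⟩ := finite_cover_balls_of_compact
    (hK.isCompact_closure_image_of_bounded (Metric.isBounded_closedBall (x := 0) (r := 1))) hr
  have hnet : ∀ᶠ i in l, ∀ u ∈ t, ‖A i u‖ < ε / 4 := (eventually_all_finite ht).mpr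
    fun u _ => by simpa using Metric.tendsto_nhds.mp (hAx u) (ε / 4) (by positivity)
  filter_upwards [hnet] with i hi
  rw [dist_zero_right]
  refine (opNorm_le_of_unit_norm (by positivity) fun v hv => ?_).trans_lt (half_lt_self hε)
  obtain ⟨u, hu, hKvu⟩ := Set.mem_iUnion₂.mp
    (hcover (subset_closure ⟨v, by simp [hv], rfl⟩))
  calc ‖(A i ∘L K) v‖ = ‖A i (K v - u) + A i u‖ := by simp
    _ ≤ ‖A i‖ * ‖K v - u‖ + ‖A i u‖ := norm_add_le_of_le (le_opNorm _ _) le_rfl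
    _ ≤ M * r + ε / 4 := by
        gcongr
        · exact (norm_nonneg _).trans (hA i)
        · exact hA i
        · exact (mem_ball_iff_norm.mp hKvu).le
        · exact (hi u hu).le
    _ ≤ ε / 2 := by linarith

namespace IsOpenIntervalSpectralProj

variable {T P : H →L[ℂ] H}

theorem isStarProjection {a b : ℝ} (hP : IsOpenIntervalSpectralProj T P a b) :
    IsStarProjection P :=
  ⟨hP.1, hP.2.1⟩

theorem range_le {Q : H →L[ℂ] H} {a b a' b' : ℝ} (hP : IsOpenIntervalSpectralProj T P a b)
    (hQ : IsOpenIntervalSpectralProj T Q a' b') (ha : a' ≤ a) (hb : b ≤ b') :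
    LinearMap.range (P : H →ₗ[ℂ] H) ≤ LinearMap.range (Q : H →ₗ[ℂ] H) := by
  refine hQ.2.2.2.2 P hP.1 hP.2.1 hP.2.2.1 fun x hx hx0 => ?_
  obtain ⟨hlow, hupp⟩ := hP.2.2.2.1 x hx hx0
  constructor
  · exact lt_of_le_of_lt (mul_le_mul_of_nonneg_right ha (sq_nonneg _)) hlow
  · exact hupp.trans_le (mul_le_mul_of_nonneg_right hb (sq_nonneg _))

theorem comp_eq_right_of_le {Q : H →L[ℂ] H} {a b a' b' : ℝ}
    (hP : IsOpenIntervalSpectralProj T P a b) (hQ : IsOpenIntervalSpectralProj T Q a' b')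
    (ha : a' ≤ a) (hb : b ≤ b') : Q ∘L P = P :=
  hQ.1.comp_eq_right_of_range_le (hP.range_le hQ ha hb)

theorem abs_re_inner_sub_smul_le {E r : ℝ} (hP : IsOpenIntervalSpectralProj T P (E - r) (E + r))
    {y : H} (hy : y ∈ LinearMap.range (P : H →ₗ[ℂ] H)) :
    |RCLike.re ⟪T y - (E : ℂ) • y, y⟫_ℂ| ≤ r * ‖y‖ ^ 2 := by
  rcases eq_or_ne y 0 with rfl | hy0
  · simp
  obtain ⟨hlow, hupp⟩ := hP.2.2.2.1 y hy hy0
  rw [reApplyInnerSelf_apply] at hlow hupp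
  have hE : RCLike.re ⟪(E : ℂ) • y, y⟫_ℂ = E * ‖y‖ ^ 2 := by
    rw [inner_smul_left, Complex.conj_ofReal, RCLike.re_to_complex, Complex.re_ofReal_mul,
      ← RCLike.re_to_complex, inner_self_eq_norm_sq]
  rw [inner_sub_left, map_sub, hE, abs_le]
  constructor <;> linarith

theorem norm_sub_smul_le {E r : ℝ} (hT : IsSelfAdjoint T)
    (hP : IsOpenIntervalSpectralProj T P (E - r) (E + r))
    {y : H} (hy : y ∈ LinearMap.range (P : H →ₗ[ℂ] H)) : ‖T y - (E : ℂ) • y‖ ≤ r * ‖y‖ := by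
  rcases eq_or_ne y 0 with rfl | hy0
  · simp
  have hr : 0 ≤ r := by
    obtain ⟨hlow, hupp⟩ := hP.2.2.2.1 y hy hy0
    nlinarith [norm_pos_iff.mpr hy0]
  set A := T - algebraMap ℝ (H →L[ℂ] H) E
  have hAx : ∀ x, A x = T x - (E : ℂ) • x := fun x => by simp [A]
  have hAP : Commute A P := (show Commute T P from hP.2.2.1).sub_left (Algebra.commutes E P)
  have hS : IsSelfAdjoint (P ∘L A ∘L P) := by
    have := (hT.sub (.algebraMap _ (.all E))).conj_adjoint P
    rwa [hP.2.1.adjoint_eq] at this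
  have hSnorm : ‖P ∘L A ∘L P‖ ≤ r := by
    refine norm_le_of_abs_re_inner_le hS.isSymmetric hr fun x => ?_
    have hPx : ‖P x‖ ≤ ‖x‖ := hP.isStarProjection.norm_apply_le x
    rw [comp_apply, comp_apply, hP.2.1.isSymmetric.apply_clm, hAx]
    calc _ ≤ r * ‖P x‖ ^ 2 := hP.abs_re_inner_sub_smul_le ⟨x, rfl⟩
      _ ≤ r * ‖x‖ ^ 2 := by gcongr
  have hSy : (P ∘L A ∘L P) y = A y := by
    have hPy := IsIdempotentElem.apply_of_mem_range hP.1 hy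
    rw [comp_apply, comp_apply, hPy, ← mul_apply_eq_comp, ← hAP.eq, mul_apply_eq_comp, hPy]
  calc ‖T y - (E : ℂ) • y‖ = ‖(P ∘L A ∘L P) y‖ := by rw [hSy, hAx]
    _ ≤ ‖P ∘L A ∘L P‖ * ‖y‖ := le_opNorm _ y
    _ ≤ r * ‖y‖ := by gcongr

theorem eq_zero_of_forall_mem_range {ι : Type*} {l : Filter ι} [l.NeBot] {Q : ι → H →L[ℂ] H}
    {E : ℝ} {r : ι → ℝ} (hT : IsSelfAdjoint T) (hr : Tendsto r l (𝓝 0))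
    (hQ : ∀ i, IsOpenIntervalSpectralProj T (Q i) (E - r i) (E + r i))
    (hE : ∀ x : H, T x = (E : ℂ) • x → x = 0) {y : H}
    (hy : ∀ i, y ∈ LinearMap.range (Q i : H →ₗ[ℂ] H)) : y = 0 := by
  refine hE y (sub_eq_zero.mp (norm_le_zero_iff.mp ?_))
  have hlim := hr.mul_const ‖y‖
  rw [zero_mul] at hlim
  exact ge_of_tendsto' hlim fun i => (hQ i).norm_sub_smul_le hT (hy i)

end IsOpenIntervalSpectralProj

theorem exists_norm_spectralProj_comp_le {T K : H →L[ℂ] H} {P : ℝ → H →L[ℂ] H} {E δ ε : ℝ}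
    (hT : IsSelfAdjoint T) (hE : ∀ x : H, T x = (E : ℂ) • x → x = 0) (hδ : 0 < δ)
    (hP : ∀ d ∈ Ioc 0 δ, IsOpenIntervalSpectralProj T (P d) (E - d / 2) (E + d / 2))
    (hK : IsCompactOperator K) (hε : 0 < ε) : ∃ δ₀ ∈ Ioc 0 δ, ‖P δ₀ ∘L K‖ ≤ ε := by
  set d : ℕ → ℝ := fun n => δ / (n + 1)
  have hd : ∀ n, d n ∈ Ioc 0 δ := fun n =>
    ⟨by positivity, div_le_self hδ.le (by linarith [n.cast_nonneg (α := ℝ)])⟩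
  have hanti : Antitone fun n => LinearMap.range (P (d n) : H →ₗ[ℂ] H) := fun m n hmn =>
    have hdmn : d n ≤ d m := div_le_div_of_nonneg_left hδ.le (by positivity) (by gcongr)
    (hP _ (hd n)).range_le (hP _ (hd m)) (by linarith) (by linarith)
  have hd_lim : Tendsto (fun n => d n / 2) atTop (𝓝 0) := by
    simpa using
      ((tendsto_const_div_atTop_nhds_zero_nat δ).comp (tendsto_add_atTop_nat 1)).div_const 2
  have hbot : ⨅ n, LinearMap.range (P (d n) : H →ₗ[ℂ] H) = ⊥ :=
    (Submodule.eq_bot_iff _).mpr fun y hy =>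
      IsOpenIntervalSpectralProj.eq_zero_of_forall_mem_range hT hd_lim
        (fun n => hP _ (hd n)) hE (Submodule.mem_iInf _ |>.mp hy)
  have hPK : Tendsto (fun n => P (d n) ∘L K) atTop (𝓝 0) :=
    tendsto_comp_nhds_zero_of_isCompactOperator
      (fun n => IsStarProjection.norm_le _ (hP _ (hd n)).isStarProjection)
      (tendsto_apply_nhds_zero_of_antitone (fun n => (hP _ (hd n)).isStarProjection) hanti hbot)
      hK
  obtain ⟨N, hN⟩ := (hPK.eventually (Metric.closedBall_mem_nhds 0 hε)).exists
  exact ⟨d N, hd N, by rwa [dist_zero_right] at hN⟩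

theorem IsStarProjection.neg_norm_smul_le_conj {P Q K : H →L[ℂ] H} (hP : IsStarProjection P)
    (hQ : IsSelfAdjoint Q) (hQP : Q ∘L P = P) (hK : IsSelfAdjoint K) :
    -(‖Q ∘L K‖ • P) ≤ P ∘L K ∘L P := by
  rw [ContinuousLinearMap.le_def, sub_neg_eq_add]
  refine ⟨?_, fun x => ?_⟩
  · have hPKP := hK.conj_adjoint P
    rw [hP.isSelfAdjoint.adjoint_eq] at hPKP
    exact (hPKP.add ((IsSelfAdjoint.all _).smul hP.isSelfAdjoint)).isSymmetric
  have hPx : Q (P x) = P x := congr($hQP x)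
  have hKPx : |RCLike.re ⟪K (P x), P x⟫_ℂ| ≤ ‖Q ∘L K‖ * ‖P x‖ ^ 2 := by
    calc |RCLike.re ⟪K (P x), P x⟫_ℂ| = |RCLike.re ⟪(Q ∘L K) (P x), P x⟫_ℂ| := by
          rw [comp_apply, hQ.isSymmetric.apply_clm, hPx]
      _ ≤ ‖(Q ∘L K) (P x)‖ * ‖P x‖ := (RCLike.abs_re_le_norm _).trans (norm_inner_le_norm _ _)
      _ ≤ ‖Q ∘L K‖ * ‖P x‖ * ‖P x‖ := by gcongr; exact le_opNorm _ _
      _ = ‖Q ∘L K‖ * ‖P x‖ ^ 2 := by ring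
  rw [reApplyInnerSelf_apply, add_apply, smul_apply, inner_add_left, map_add, comp_apply,
    comp_apply, hP.isSelfAdjoint.isSymmetric.apply_clm, RCLike.real_smul_eq_coe_smul (K := ℂ),
    inner_smul_real_left, RCLike.smul_re, hP.re_inner_apply_self]
  linarith [neg_abs_le (RCLike.re ⟪K (P x), P x⟫_ℂ)]

theorem mourre_estimate_of_subprojection {P Q R B K : H →L[ℂ] H} {C c : ℝ}
    (hP : IsStarProjection P) (hQ : IsSelfAdjoint Q) (hR : IsSelfAdjoint R) (hQP : Q ∘L P = P)
    (hRP : R ∘L P = P) (hK : IsSelfAdjoint K) (hM : C • R + K ≤ R ∘L B ∘L R)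
    (hc : ‖Q ∘L K‖ ≤ C - c) : c • P ≤ P ∘L B ∘L P := by
  have hPR : P ∘L R = P := by
    have := congrArg adjoint hRP
    rwa [adjoint_comp, hR.adjoint_eq, hP.isSelfAdjoint.adjoint_eq] at this
  have hPP : P ∘L P = P := hP.isIdempotentElem.eq
  calc c • P ≤ C • P + -(‖Q ∘L K‖ • P) := by
        rw [ContinuousLinearMap.le_def, ← sub_eq_add_neg, ← sub_smul, ← sub_smul,
          ← Complex.coe_smul]
        exact (IsPositive.of_isStarProjection hP).smul_of_nonneg (by norm_cast; linarith)
    _ ≤ C • P + P ∘L K ∘L P := by gcongr; exact hP.neg_norm_smul_le_conj hQ hQP hK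
    _ = P ∘L (C • R + K) ∘L P := by
        rw [add_comp, comp_add, smul_comp, comp_smul, hRP, hPP]
    _ ≤ P ∘L (R ∘L B ∘L R) ∘L P := hP.isSelfAdjoint.conjugate_le_conjugate hM
    _ = P ∘L B ∘L P := by
        simp only [← comp_assoc, hPR]
        rw [comp_assoc, comp_assoc, hRP, comp_assoc]

theorem mourre_estimate_without_compact_error_general (T B K : H →L[ℂ] H)
    (hT : IsSelfAdjoint T)
    (hK : IsSelfAdjoint K) (hKc : IsCompactOperator ⇑K)
    (E C : ℝ) (hC : 0 < C)
    (hE : E ∉ closure {μ : ℝ | ∃ x : H, x ≠ 0 ∧ T x = (μ : ℂ) • x})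
    (δ : ℝ) (hδ : 0 < δ) (P : ℝ → H →L[ℂ] H)
    (hP : ∀ d ∈ Set.Ioc (0:ℝ) δ,
      IsOpenIntervalSpectralProj T (P d) (E - d / 2) (E + d / 2))
    (hMourre : ((P δ ∘L B ∘L P δ) - (C • P δ + K)).IsPositive) :
    ∃ δ₀ ∈ Set.Ioc (0:ℝ) δ, ∀ d ∈ Set.Ioc (0:ℝ) δ₀,
      ((P d ∘L B ∘L P d) - (C / 2) • P d).IsPositive := by
  have hE_eigen : ∀ x : H, T x = (E : ℂ) • x → x = 0 := fun x hx => by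
    by_contra hx0
    exact hE (subset_closure ⟨x, hx0, hx⟩)
  obtain ⟨δ₀, hδ₀, hK₀⟩ := exists_norm_spectralProj_comp_le hT hE_eigen hδ hP hKc (half_pos hC)
  refine ⟨δ₀, hδ₀, fun d hd => ?_⟩
  have hdδ : d ∈ Ioc 0 δ := ⟨hd.1, hd.2.trans hδ₀.2⟩
  have hδδ : δ ∈ Ioc 0 δ := ⟨hδ, le_rfl⟩
  refine mourre_estimate_of_subprojection (hP d hdδ).isStarProjection (hP δ₀ hδ₀).2.1
    (hP δ hδδ).2.1 ?_ ?_ hK hMourre (by linarith)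
  · exact (hP d hdδ).comp_eq_right_of_le (hP δ₀ hδ₀) (by linarith [hd.2]) (by linarith [hd.2])
  · exact (hP d hdδ).comp_eq_right_of_le (hP δ hδδ) (by linarith [hdδ.2]) (by linarith [hdδ.2])

/-- Corollary 3.1 (ii): if `E` is not in the closure of the point spectrum of
the self-adjoint operator `T`, `P d = 𝟙_{(E-d/2,E+d/2)}(T)`, and the Mourre
estimate `P δ B P δ ≥ C P δ + K` holds with `C > 0` and `K` compact
self-adjoint, then for all sufficiently small `d ∈ (0, δ)` one has
`P d B P d ≥ (C/2) P d`. -/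
theorem mourre_estimate_without_compact_error (T B K : H →L[ℂ] H)
    (hT : IsSelfAdjoint T) (hB : IsSelfAdjoint B)
    (hK : IsSelfAdjoint K) (hKc : IsCompactOperator ⇑K)
    (E C : ℝ) (hC : 0 < C)
    (hE : E ∉ closure {μ : ℝ | ∃ x : H, x ≠ 0 ∧ T x = (μ : ℂ) • x})
    (δ : ℝ) (hδ : 0 < δ) (P : ℝ → H →L[ℂ] H)
    (hP : ∀ d ∈ Set.Ioc (0:ℝ) δ,
      IsOpenIntervalSpectralProj T (P d) (E - d / 2) (E + d / 2))
    (hMourre : ((P δ ∘L B ∘L P δ) - (C • P δ + K)).IsPositive) :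
    ∃ δ₀ ∈ Set.Ioc (0:ℝ) δ, ∀ d ∈ Set.Ioc (0:ℝ) δ₀,
      ((P d ∘L B ∘L P d) - (C / 2) • P d).IsPositive :=
  mourre_estimate_without_compact_error_general T B K hT hK hKc E C hC hE δ hδ P hP hMourre
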